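/- arXiv:2110.15842 — 2 statements merged into one kernel-verified Lean document; each statement's English description precedes it below -/
import Mathlib

section
/- Let 0 < α < 1 and let v_1, ..., v_n be unit vectors in C^r with |<v_i, v_j>| = α for all i ≠ j. Let M be their Gram matrix. Then for all x, y ∈ C^n: (1−α^2) <x, Mx> <y, My> + (α^2/(α^2 n + 1 − α^2)) |<Mx, My>|^2 ≥ ∑_{i=1}^n |(Mx)_i|^2 |(My)_i|^2. -/
/-!
Put `u = ∑ xᵢ vᵢ` and `w = ∑ yᵢ vᵢ`, so that `(M x)ᵢ = ⟪vᵢ, u⟫` and `⟪x, M x⟫ = ‖u‖²`.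
In the space of `r × r` matrices with the Frobenius inner product, the rank-one matrices
`Vᵢ = vᵢ vᵢᴴ` have Gram matrix `G = α² J + (1 - α²) I`, and `cᵢ := ⟪Vᵢ, u wᴴ⟫ = (M x)ᵢ (M y)ᵢ*`.
The orthogonal projection of `u wᴴ` onto the span of the `Vᵢ` has squared norm
`cᴴ G⁻¹ c = (∑ |cᵢ|² - β |∑ cᵢ|²) / (1 - α²)` with `β = α² / (α² n + 1 - α²)`,
and bounding it by `‖u wᴴ‖² = ‖u‖² ‖w‖²` is the inequality.
-/

open Matrix Finset
open scoped InnerProductSpace ComplexConjugate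

variable {𝕜 : Type*} [RCLike 𝕜]

section Projection

variable {E ι : Type*} [NormedAddCommGroup E] [InnerProductSpace 𝕜 E] [Fintype ι] [DecidableEq ι]
  {V : ι → E} {γ δ : ℝ}

theorem inner_sum_smul_of_inner_eq (hV : ∀ i j, ⟪V i, V j⟫_𝕜 = γ + if i = j then (δ : 𝕜) else 0)
    (t : ι → 𝕜) (j : ι) :
    ⟪V j, ∑ i, t i • V i⟫_𝕜 = γ * ∑ i, t i + δ * t j := by
  simp only [inner_sum, inner_smul_right, hV, mul_add, mul_ite, mul_zero, sum_add_distrib,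
    sum_ite_eq, mem_univ, if_true, ← sum_mul]
  ring

theorem sum_norm_inner_sq_le_of_inner_eq (hδ : 0 < δ) (hγδ : γ * Fintype.card ι + δ ≠ 0)
    (hV : ∀ i j, ⟪V i, V j⟫_𝕜 = γ + if i = j then (δ : 𝕜) else 0) (T : E) :
    ∑ i, ‖⟪V i, T⟫_𝕜‖ ^ 2
      ≤ δ * ‖T‖ ^ 2 + γ / (γ * Fintype.card ι + δ) * ‖∑ i, ⟪V i, T⟫_𝕜‖ ^ 2 := by
  set c := fun i => ⟪V i, T⟫_𝕜
  set s := ∑ i, c i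
  set β := γ / (γ * Fintype.card ι + δ)
  -- `t = G⁻¹ c` for the Gram matrix `G = γ J + δ I`, since `G⁻¹ = (I - β J) / δ`
  set t := fun i => (c i - β * s) / δ
  set P := ∑ i, t i • V i
  have hδ' : (δ : 𝕜) ≠ 0 := by exact_mod_cast hδ.ne'
  have hγδ' : (γ * Fintype.card ι + δ : 𝕜) ≠ 0 := by exact_mod_cast hγδ
  have hnormal : ∀ j, ⟪V j, P⟫_𝕜 = c j := by
    intro j
    rw [inner_sum_smul_of_inner_eq hV]
    simp only [t, β, ← sum_div, sum_sub_distrib, sum_const, card_univ, nsmul_eq_mul]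
    push_cast
    field_simp
    ring
  have horth : ⟪P, T - P⟫_𝕜 = 0 := by
    simp only [P, sum_inner, inner_smul_left, inner_sub_right, hnormal, c, sub_self]
  have hP : ‖P‖ ^ 2 = (∑ i, ‖c i‖ ^ 2 - β * ‖s‖ ^ 2) / δ := by
    have hPP : ⟪P, P⟫_𝕜 = ⟪P, T⟫_𝕜 := by
      rw [← sub_eq_zero, ← inner_sub_right, ← neg_sub, inner_neg_right, horth, neg_zero]
    have hPT : ⟪P, T⟫_𝕜 = ∑ i, (conj (c i) * c i - β * (conj s * c i)) / δ := by
      simp only [P, t, sum_inner, inner_smul_left, map_div₀, map_sub, map_mul, RCLike.conj_ofReal]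
      exact sum_congr rfl fun i _ => by ring
    rw [← sum_div, sum_sub_distrib, ← mul_sum, ← mul_sum, show ∑ i, c i = s from rfl] at hPT
    simp only [RCLike.conj_mul] at hPT
    rw [inner_self_eq_norm_sq_to_K, hPT] at hPP
    exact_mod_cast hPP
  have hPle : ‖P‖ ^ 2 ≤ ‖T‖ ^ 2 := by
    have := norm_add_sq_eq_norm_sq_add_norm_sq_of_inner_eq_zero (𝕜 := 𝕜) P (T - P) horth
    rw [add_sub_cancel] at this
    nlinarith [mul_self_nonneg ‖T - P‖]
  rw [hP, div_le_iff₀ hδ] at hPle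
  linarith

end Projection

section OuterVec

variable {κ : Type*}

def outerVec (u w : EuclideanSpace 𝕜 κ) : EuclideanSpace 𝕜 (κ × κ) :=
  WithLp.toLp 2 fun p => u p.1 * conj (w p.2)

variable [Fintype κ]

theorem inner_outerVec (a b c d : EuclideanSpace 𝕜 κ) :
    ⟪outerVec a b, outerVec c d⟫_𝕜 = ⟪a, c⟫_𝕜 * ⟪d, b⟫_𝕜 := by
  simp only [outerVec, PiLp.inner_apply, RCLike.inner_apply, Fintype.sum_prod_type, sum_mul_sum,
    map_mul, RCLike.conj_conj]
  exact sum_congr rfl fun p _ => sum_congr rfl fun q _ => by ring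

theorem norm_outerVec (u w : EuclideanSpace 𝕜 κ) : ‖outerVec u w‖ = ‖u‖ * ‖w‖ := by
  have h := inner_outerVec u w u w
  rw [inner_self_eq_norm_sq_to_K, inner_self_eq_norm_sq_to_K, inner_self_eq_norm_sq_to_K] at h
  have : ‖outerVec u w‖ ^ 2 = (‖u‖ * ‖w‖) ^ 2 := by rw [mul_pow]; exact_mod_cast h
  exact (pow_left_inj₀ (norm_nonneg _) (by positivity) two_ne_zero).1 this

theorem inner_outerVec_self (a b : EuclideanSpace 𝕜 κ) :
    ⟪outerVec a a, outerVec b b⟫_𝕜 = (‖⟪a, b⟫_𝕜‖ ^ 2 : ℝ) := by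
  rw [inner_outerVec, ← inner_conj_symm b a, RCLike.mul_conj]
  norm_cast

theorem inner_outerVec_self_of_equiangular {ι : Type*} [DecidableEq ι]
    {v : ι → EuclideanSpace 𝕜 κ} {α : ℝ} (hv : ∀ i, ‖v i‖ = 1)
    (hangle : ∀ i j, i ≠ j → ‖⟪v i, v j⟫_𝕜‖ = α) (i j : ι) :
    ⟪outerVec (v i) (v i), outerVec (v j) (v j)⟫_𝕜
      = ((α ^ 2 : ℝ) : 𝕜) + if i = j then ((1 - α ^ 2 : ℝ) : 𝕜) else 0 := by
  rw [inner_outerVec_self]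
  split_ifs with h
  · subst h
    rw [inner_self_eq_norm_sq_to_K, hv]
    norm_num
  · rw [hangle i j h, add_zero]

end OuterVec

theorem gram_mulVec_apply {E ι : Type*} [NormedAddCommGroup E] [InnerProductSpace 𝕜 E]
    [Fintype ι] (v : ι → E) (x : ι → 𝕜) (i : ι) :
    (gram 𝕜 v *ᵥ x) i = ⟪v i, ∑ j, x j • v j⟫_𝕜 := by
  simp only [mulVec, dotProduct, gram_apply, inner_sum, inner_smul_right, mul_comm]

/-- Geometric inequality for spherical `S¹(α)`-codes in `ℂ^r`. -/
theorem stmt3 (r n : ℕ) (α : ℝ) (hα0 : 0 < α) (hα1 : α < 1)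
    (v : Fin n → EuclideanSpace ℂ (Fin r)) (hv : ∀ i, ‖v i‖ = 1)
    (hangle : ∀ i j, i ≠ j → ‖(inner ℂ (v i) (v j) : ℂ)‖ = α)
    (M : Matrix (Fin n) (Fin n) ℂ) (hM : ∀ i j, M i j = inner ℂ (v i) (v j))
    (x y : Fin n → ℂ) :
    (1 - α ^ 2) * (star x ⬝ᵥ M.mulVec x).re * (star y ⬝ᵥ M.mulVec y).re
      + α ^ 2 / (α ^ 2 * n + 1 - α ^ 2) * ‖star (M.mulVec x) ⬝ᵥ M.mulVec y‖ ^ 2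
      ≥ ∑ i, ‖M.mulVec x i‖ ^ 2 * ‖M.mulVec y i‖ ^ 2 := by
  obtain rfl : M = gram ℂ v := Matrix.ext hM
  have hδ : 0 < 1 - α ^ 2 := by nlinarith
  have hden : α ^ 2 * Fintype.card (Fin n) + (1 - α ^ 2) ≠ 0 := by positivity
  have key := sum_norm_inner_sq_le_of_inner_eq hδ hden
    (inner_outerVec_self_of_equiangular hv hangle) (outerVec (∑ j, x j • v j) (∑ j, y j • v j))
  simp only [inner_outerVec, ← gram_mulVec_apply, ← inner_conj_symm (∑ j, y j • v j),
    norm_mul, RCLike.norm_conj, mul_pow, norm_outerVec, Fintype.card_fin] at key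
  rw [star_dotProduct_gram_mulVec, star_dotProduct_gram_mulVec, ← RCLike.re_to_complex,
    ← RCLike.re_to_complex, inner_self_eq_norm_sq, inner_self_eq_norm_sq,
    ← RCLike.norm_conj (star _ ⬝ᵥ _)]
  simp only [dotProduct, map_sum, map_mul, Pi.star_apply, RCLike.star_def, RCLike.conj_conj]
  rw [add_sub_assoc]
  linarith
end

section
/- Let G be a k-regular graph on n vertices with second eigenvalue λ_2 and smallest eigenvalue λ_n. If k − λ_2 < n/2, then 2(k − (k−λ_2)^2/n) ≤ λ_2(λ_2+1)(2λ_2+1)/(1 − 2(k−λ_2)/n) − λ_2(3λ_2+1). In particular, since the left-hand side exceeds k + λ_2, this gives an upper bound on k in terms of λ_2 and n. -/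
/-!
Write `c = (k - λ₂) / n` and `B = λ₂ I + c J - A`. Since the all-ones vector is a `k`-eigenvector
of `A` and every other eigendirection has eigenvalue at most `λ₂`, the matrix `B` is positive
semidefinite. By the Schur product theorem so is its entrywise cube, hence the sum of the cubes of
the entries of `B` is nonnegative. The entries take only three values: `λ₂ + c` on the diagonal,
`c - 1` on the `nk` edge positions and `c` elsewhere, and the resulting inequality
`n (λ₂ + c)³ + nk (c - 1)³ + n (n - 1 - k) c³ ≥ 0` rearranges to the claim.
-/

open Matrix

namespace Matrix.IsHermitian

variable {ι : Type*} [Fintype ι] [DecidableEq ι] {A : Matrix ι ι ℝ} (hA : A.IsHermitian)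

lemma dotProduct_eq_sum_eigenvectorBasis (x y : ι → ℝ) :
    x ⬝ᵥ y = ∑ i, (⇑(hA.eigenvectorBasis i) ⬝ᵥ x) * (⇑(hA.eigenvectorBasis i) ⬝ᵥ y) := by
  have := hA.eigenvectorBasis.sum_inner_mul_inner (WithLp.toLp 2 x) (WithLp.toLp 2 y)
  simp only [EuclideanSpace.inner_eq_star_dotProduct, star_trivial] at this
  simpa [dotProduct_comm] using this.symm

lemma eigenvectorBasis_dotProduct_mulVec (i : ι) (x : ι → ℝ) :
    ⇑(hA.eigenvectorBasis i) ⬝ᵥ (A *ᵥ x) = hA.eigenvalues i * (⇑(hA.eigenvectorBasis i) ⬝ᵥ x) := by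
  have hAT : Aᵀ = A := by rw [← conjTranspose_eq_transpose_of_trivial]; exact hA.eq
  rw [dotProduct_mulVec, ← mulVec_transpose, hAT, mulVec_eigenvectorBasis, smul_dotProduct,
    smul_eq_mul]

lemma dotProduct_mulVec_eq_sum_eigenvalues (x : ι → ℝ) :
    x ⬝ᵥ (A *ᵥ x) = ∑ i, hA.eigenvalues i * (⇑(hA.eigenvectorBasis i) ⬝ᵥ x) ^ 2 := by
  rw [hA.dotProduct_eq_sum_eigenvectorBasis]
  simp only [eigenvectorBasis_dotProduct_mulVec]
  exact Finset.sum_congr rfl fun i _ => by ring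

lemma eigenvectorBasis_dotProduct_self (i : ι) :
    ⇑(hA.eigenvectorBasis i) ⬝ᵥ ⇑(hA.eigenvectorBasis i) = 1 := by
  have := real_inner_self_eq_norm_sq (hA.eigenvectorBasis i)
  rwa [hA.eigenvectorBasis.orthonormal.1 i, EuclideanSpace.inner_eq_star_dotProduct, star_trivial,
    one_pow] at this

lemma eigenvalues_le_of_dotProduct_mulVec_le {k : ℝ} (h : ∀ x, x ⬝ᵥ (A *ᵥ x) ≤ k * (x ⬝ᵥ x))
    (i : ι) : hA.eigenvalues i ≤ k := by
  simpa [mulVec_eigenvectorBasis, eigenvectorBasis_dotProduct_self] using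
    h (hA.eigenvectorBasis i)

/-- If the `j`-th eigenvalue exceeds `μ`, then it is the only eigenvalue equal to `k`, so `w` is a
multiple of the `j`-th eigenvector and `y ⊥ w` has no component along it. -/
lemma dotProduct_mulVec_le_of_dotProduct_eq_zero {k μ : ℝ} {j : ι}
    (hk : ∀ i, hA.eigenvalues i ≤ k) (hμ : ∀ i ≠ j, hA.eigenvalues i ≤ μ)
    {w : ι → ℝ} (hw : w ≠ 0) (hAw : A *ᵥ w = k • w) {y : ι → ℝ} (hy : w ⬝ᵥ y = 0) :
    y ⬝ᵥ (A *ᵥ y) ≤ μ * (y ⬝ᵥ y) := by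
  rw [hA.dotProduct_mulVec_eq_sum_eigenvalues, hA.dotProduct_eq_sum_eigenvectorBasis y y,
    Finset.mul_sum]
  set b := hA.eigenvectorBasis
  set ε := hA.eigenvalues
  refine Finset.sum_le_sum fun i _ => ?_
  suffices ε i ≤ μ ∨ ⇑(b i) ⬝ᵥ y = 0 by
    rcases this with h | h
    · nlinarith [sq_nonneg (⇑(b i) ⬝ᵥ y)]
    · simp [h]
  by_cases hij : i = j
  swap
  · exact .inl (hμ i hij)
  subst hij
  by_cases hi : ε i ≤ μ
  · exact .inl hi
  right
  have hw_perp : ∀ l ≠ i, ⇑(b l) ⬝ᵥ w = 0 := by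
    intro l hl
    have hεl : ε l < k := (hμ l hl).trans_lt ((not_le.mp hi).trans_le (hk i))
    have hkl : ε l * (⇑(b l) ⬝ᵥ w) = k * (⇑(b l) ⬝ᵥ w) := by
      rw [← eigenvectorBasis_dotProduct_mulVec, hAw, dotProduct_smul, smul_eq_mul]
    exact (mul_eq_zero.mp (by linarith : (ε l - k) * (⇑(b l) ⬝ᵥ w) = 0)).resolve_left (by linarith)
  have hsingle : ∀ z, w ⬝ᵥ z = (⇑(b i) ⬝ᵥ w) * (⇑(b i) ⬝ᵥ z) := fun z => by
    rw [hA.dotProduct_eq_sum_eigenvectorBasis, Finset.sum_eq_single i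
      (fun l _ hl => by rw [hw_perp l hl, zero_mul]) (by simp)]
  have hwi : ⇑(b i) ⬝ᵥ w ≠ 0 := fun h0 => hw <| dotProduct_self_eq_zero.mp <| by
    rw [hsingle, h0, zero_mul]
  rw [hsingle] at hy
  exact (mul_eq_zero.mp hy).resolve_left hwi

end Matrix.IsHermitian

namespace SimpleGraph

variable {V : Type*} [Fintype V] (G : SimpleGraph V) [DecidableRel G.Adj] {k : ℕ}

lemma adjMatrix_mulVec_one (hreg : G.IsRegularOfDegree k) :
    G.adjMatrix ℝ *ᵥ 1 = (k : ℝ) • 1 := by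
  ext v
  simpa using G.adjMatrix_mulVec_const_apply_of_regular (a := (1 : ℝ)) hreg (v := v)

variable [DecidableEq V]

lemma dotProduct_adjMatrix_mulVec_le (hreg : G.IsRegularOfDegree k) (x : V → ℝ) :
    x ⬝ᵥ (G.adjMatrix ℝ *ᵥ x) ≤ k * (x ⬝ᵥ x) := by
  have := (G.posSemidef_lapMatrix ℝ).dotProduct_mulVec_nonneg x
  rw [star_trivial, lapMatrix, sub_mulVec, dotProduct_sub, dotProduct_mulVec_degMatrix,
    sub_nonneg] at this
  have hdeg : ∑ i, (G.degree i : ℝ) * x i * x i = k * (x ⬝ᵥ x) := by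
    simp only [hreg _, dotProduct, mul_assoc, Finset.mul_sum]
  rwa [hdeg] at this

noncomputable def slackMatrix (k : ℕ) (μ : ℝ) : Matrix V V ℝ :=
  μ • 1 + (((k : ℝ) - μ) / Fintype.card V) • of (fun _ _ => 1) - G.adjMatrix ℝ

lemma slackMatrix_apply (k : ℕ) (μ : ℝ) (u v : V) :
    G.slackMatrix k μ u v =
      (if u = v then μ else 0) + ((k : ℝ) - μ) / Fintype.card V - G.adjMatrix ℝ u v := by
  simp [slackMatrix, one_apply]

lemma isHermitian_slackMatrix (k : ℕ) (μ : ℝ) : (G.slackMatrix k μ).IsHermitian := by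
  ext u v
  simp only [conjTranspose_apply, star_trivial, slackMatrix_apply, eq_comm (a := u),
    G.adjMatrix_apply, G.adj_comm]

lemma dotProduct_slackMatrix_mulVec (k : ℕ) (μ : ℝ) (x : V → ℝ) :
    x ⬝ᵥ (G.slackMatrix k μ *ᵥ x) =
      μ * (x ⬝ᵥ x) + ((k : ℝ) - μ) / Fintype.card V * (∑ i, x i) ^ 2
        - x ⬝ᵥ (G.adjMatrix ℝ *ᵥ x) := by
  have hJ : (of (fun _ _ => (1 : ℝ)) : Matrix V V ℝ) *ᵥ x = (∑ i, x i) • 1 := by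
    ext; simp [mulVec, dotProduct]
  simp only [slackMatrix, sub_mulVec, add_mulVec, smul_mulVec, one_mulVec, hJ, dotProduct_sub,
    dotProduct_add, dotProduct_smul, dotProduct_one, smul_eq_mul]
  ring

/-- The slack matrix kills the all-ones vector and acts as `μ I - A` on its orthogonal
complement. -/
lemma posSemidef_slackMatrix [Nonempty V] (hreg : G.IsRegularOfDegree k) {μ : ℝ}
    (hμ : ∀ y : V → ℝ, ∑ i, y i = 0 → y ⬝ᵥ (G.adjMatrix ℝ *ᵥ y) ≤ μ * (y ⬝ᵥ y)) :
    (G.slackMatrix k μ).PosSemidef := by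
  refine .of_dotProduct_mulVec_nonneg (G.isHermitian_slackMatrix k μ) fun x => ?_
  have hN : (Fintype.card V : ℝ) ≠ 0 := by positivity
  obtain ⟨y, α, hy, rfl⟩ : ∃ (y : V → ℝ) (α : ℝ), ∑ i, y i = 0 ∧ x = y + α • 1 := by
    refine ⟨x - ((∑ i, x i) / Fintype.card V) • 1, (∑ i, x i) / Fintype.card V, ?_, by simp⟩
    simp [Finset.sum_sub_distrib, mul_div_cancel₀ _ hN]
  have hAy : (1 : V → ℝ) ⬝ᵥ (G.adjMatrix ℝ *ᵥ y) = 0 := by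
    rw [dotProduct_mulVec, ← mulVec_transpose, transpose_adjMatrix, G.adjMatrix_mulVec_one hreg,
      smul_dotProduct, one_dotProduct, hy, smul_zero]
  rw [star_trivial, dotProduct_slackMatrix_mulVec]
  simp only [mulVec_add, mulVec_smul, G.adjMatrix_mulVec_one hreg, dotProduct_add, add_dotProduct,
    smul_dotProduct, dotProduct_smul, one_dotProduct, dotProduct_one, hAy, Pi.add_apply,
    Pi.smul_apply, Pi.one_apply, Finset.sum_add_distrib, hy, smul_eq_mul, mul_one,
    Finset.sum_const, Finset.card_univ, nsmul_eq_mul, mul_zero, add_zero, zero_add]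
  have hscale : ((k : ℝ) - μ) / Fintype.card V * (Fintype.card V * α) ^ 2 =
      ((k : ℝ) - μ) * Fintype.card V * α ^ 2 := by
    field_simp
  rw [hscale]
  linear_combination hμ y hy

lemma sum_slackMatrix_pow_three (hreg : G.IsRegularOfDegree k) (μ : ℝ) :
    ∑ u, ∑ v, G.slackMatrix k μ u v ^ 3 =
      Fintype.card V * ((μ + (k - μ) / Fintype.card V) ^ 3 + k * ((k - μ) / Fintype.card V - 1) ^ 3
        + (Fintype.card V - 1 - k) * ((k - μ) / Fintype.card V) ^ 3) := by
  set c : ℝ := ((k : ℝ) - μ) / Fintype.card V with hc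
  have hentry : ∀ u v, G.slackMatrix k μ u v ^ 3 =
      c ^ 3 + G.adjMatrix ℝ u v * ((c - 1) ^ 3 - c ^ 3)
        + if u = v then (μ + c) ^ 3 - c ^ 3 else 0 := by
    intro u v
    rw [slackMatrix_apply, ← hc]
    by_cases huv : u = v
    · subst huv
      simp only [if_true, adjMatrix_apply, G.irrefl, if_false]
      ring
    · by_cases hadj : G.Adj u v <;>
        simp only [huv, hadj, adjMatrix_apply, if_false, if_true] <;> ring
  have hrow : ∀ u, ∑ v, G.adjMatrix ℝ u v = k := fun u => by
    simpa [mulVec, dotProduct] using congrFun (G.adjMatrix_mulVec_one hreg) u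
  simp only [hentry, Finset.sum_add_distrib, ← Finset.sum_mul, hrow, Finset.sum_ite_eq,
    Finset.mem_univ, if_true, Finset.sum_const, Finset.card_univ, nsmul_eq_mul]
  ring

end SimpleGraph

lemma Matrix.PosSemidef.sum_sum_pow_three_nonneg {ι : Type*} [Fintype ι] {M : Matrix ι ι ℝ}
    (hM : M.PosSemidef) : 0 ≤ ∑ i, ∑ j, M i j ^ 3 := by
  have := ((hM.hadamard hM).hadamard hM).dotProduct_mulVec_nonneg 1
  simpa [dotProduct, mulVec, hadamard, pow_three, mul_assoc] using this

lemma Antitone.le_apply_one_of_ne {α : Type*} [Preorder α] {n : ℕ} (h : 1 < n)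
    {e ε : Fin n → α} {σ : Equiv.Perm (Fin n)} (he : ∀ i, e i = ε (σ i)) (hmono : Antitone e)
    {i : Fin n} (hi : i ≠ σ ⟨0, by omega⟩) : ε i ≤ e ⟨1, h⟩ := by
  rw [← σ.apply_symm_apply i, ← he]
  refine hmono (Fin.le_def.mpr (Nat.one_le_iff_ne_zero.mpr fun h0 => hi ?_))
  rw [← σ.apply_symm_apply i, show σ.symm i = ⟨0, by omega⟩ from Fin.ext h0]

lemma degree_bound_of_cube_sum_nonneg {N k μ : ℝ} (hN : 0 < N) (hgap : k - μ < N / 2)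
    (hS : 0 ≤ N * ((μ + (k - μ) / N) ^ 3 + k * ((k - μ) / N - 1) ^ 3
      + (N - 1 - k) * ((k - μ) / N) ^ 3)) :
    2 * (k - (k - μ) ^ 2 / N) ≤
      μ * (μ + 1) * (2 * μ + 1) / (1 - 2 * (k - μ) / N) - μ * (3 * μ + 1) := by
  have hD : 0 < 1 - 2 * (k - μ) / N := by
    rw [sub_pos, div_lt_one hN]
    linarith
  have key : μ * (μ + 1) * (2 * μ + 1) - (2 * (k - (k - μ) ^ 2 / N) + μ * (3 * μ + 1)) *
      (1 - 2 * (k - μ) / N) = 2 / N * (N * ((μ + (k - μ) / N) ^ 3 + k * ((k - μ) / N - 1) ^ 3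
        + (N - 1 - k) * ((k - μ) / N) ^ 3)) := by
    field_simp
    ring
  rw [le_sub_iff_add_le, le_div_iff₀ hD]
  linarith [mul_nonneg (div_nonneg zero_le_two hN.le) hS]

/-- Degree bound for dense regular graphs: if `G` is `k`-regular on `n ≥ 2` vertices with
adjacency eigenvalues `e 0 ≥ e 1 ≥ ... ≥ e (n-1)` (so `λ₂ = e 1`), and the spectral gap
satisfies `k − λ₂ < n/2`, then
`2(k − (k−λ₂)²/n) ≤ λ₂(λ₂+1)(2λ₂+1)/(1 − 2(k−λ₂)/n) − λ₂(3λ₂+1)`. -/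
theorem stmt18 (n k : ℕ) (hn : 2 ≤ n) (G : SimpleGraph (Fin n)) [DecidableRel G.Adj]
    (hreg : G.IsRegularOfDegree k)
    (hA : (G.adjMatrix ℝ).IsHermitian)
    (e : Fin n → ℝ) (σ : Equiv.Perm (Fin n))
    (he : ∀ i, e i = hA.eigenvalues (σ i)) (hmono : Antitone e)
    (hgap : (k : ℝ) - e ⟨1, by omega⟩ < n / 2) :
    2 * ((k : ℝ) - ((k : ℝ) - e ⟨1, by omega⟩) ^ 2 / n) ≤
      (e ⟨1, by omega⟩) * (e ⟨1, by omega⟩ + 1) * (2 * e ⟨1, by omega⟩ + 1)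
          / (1 - 2 * ((k : ℝ) - e ⟨1, by omega⟩) / n)
        - e ⟨1, by omega⟩ * (3 * e ⟨1, by omega⟩ + 1) := by
  have h1n : 1 < n := by omega
  have : Nonempty (Fin n) := ⟨⟨0, by omega⟩⟩
  have hk : ∀ i, hA.eigenvalues i ≤ k :=
    hA.eigenvalues_le_of_dotProduct_mulVec_le (G.dotProduct_adjMatrix_mulVec_le hreg)
  have hμ : ∀ i ≠ σ ⟨0, by omega⟩, hA.eigenvalues i ≤ e ⟨1, h1n⟩ :=
    fun i hi => hmono.le_apply_one_of_ne h1n he hi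
  have hperp : ∀ y : Fin n → ℝ, ∑ i, y i = 0 →
      y ⬝ᵥ (G.adjMatrix ℝ *ᵥ y) ≤ e ⟨1, h1n⟩ * (y ⬝ᵥ y) := fun y hy =>
    hA.dotProduct_mulVec_le_of_dotProduct_eq_zero hk hμ one_ne_zero (G.adjMatrix_mulVec_one hreg)
      (by rwa [one_dotProduct])
  have hcube := (G.posSemidef_slackMatrix hreg hperp).sum_sum_pow_three_nonneg
  rw [G.sum_slackMatrix_pow_three hreg, Fintype.card_fin] at hcube
  exact degree_bound_of_cube_sum_nonneg (by positivity) hgap hcube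
end
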